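/- In the N-round repeated Prisoner's Dilemma (moves C and D only) with stage payoffs satisfying T > R > P > S, every Nash equilibrium (σ, τ) induces the all-defect play path: for every round k with 1 ≤ k ≤ N, a_k = D and b_k = D. (This is the backward-induction result that unboundedly rational players defect in every round of the finitely repeated Prisoner's Dilemma.) -/
import Mathlib


/-- Moves of the Prisoner's Dilemma stage game: Cooperate, Defect. -/
inductive Move where
  | C | D
deriving DecidableEq

open Move

/-- The row player's stage payoff in the Prisoner's Dilemma. -/
def u (T R P S : ℝ) : Move → Move → ℝ
  | C, C => R
  | C, D => S
  | D, C => T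
  | D, D => P

/-- A strategy maps the opponent's past moves to a move. -/
def Strategy : Type := List Move → Move

/-- `hists σ τ k = ([a_1, …, a_k], [b_1, …, b_k])`: the histories of moves of
the two players after `k` rounds, where `a_i = σ [b_1, …, b_{i-1}]` and
`b_i = τ [a_1, …, a_{i-1}]`. -/
def hists (σ τ : Strategy) : ℕ → List Move × List Move
  | 0 => ([], [])
  | k + 1 =>
    let h := hists σ τ k
    (h.1 ++ [σ h.2], h.2 ++ [τ h.1])

/-- `moveA σ τ k = a_{k+1}`, the first player's move in round `k+1`. -/
def moveA (σ τ : Strategy) (k : ℕ) : Move := σ (hists σ τ k).2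

/-- `moveB σ τ k = b_{k+1}`, the second player's move in round `k+1`. -/
def moveB (σ τ : Strategy) (k : ℕ) : Move := τ (hists σ τ k).1

/-- The total payoff of the first player (playing `σ`) over `N` rounds. -/
def payoffA (T R P S : ℝ) (σ τ : Strategy) (N : ℕ) : ℝ :=
  ∑ k ∈ Finset.range N, u T R P S (moveA σ τ k) (moveB σ τ k)

/-- The total payoff of the second player (playing `τ`) over `N` rounds. -/
def payoffB (T R P S : ℝ) (σ τ : Strategy) (N : ℕ) : ℝ :=
  ∑ k ∈ Finset.range N, u T R P S (moveB σ τ k) (moveA σ τ k)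

/- ### Auxiliary lemmas -/

lemma hists_len (σ τ : Strategy) : ∀ k, (hists σ τ k).1.length = k ∧ (hists σ τ k).2.length = k
  | 0 => ⟨rfl, rfl⟩
  | k + 1 => by
    obtain ⟨h1, h2⟩ := hists_len σ τ k
    simp [hists, h1, h2]

lemma hists_swap (σ τ : Strategy) : ∀ k, hists τ σ k = ((hists σ τ k).2, (hists σ τ k).1)
  | 0 => rfl
  | k + 1 => by simp [hists, hists_swap σ τ k]

lemma moveA_swap (σ τ : Strategy) (k : ℕ) : moveA τ σ k = moveB σ τ k := by
  unfold moveA moveB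
  rw [hists_swap σ τ k]

lemma moveB_swap (σ τ : Strategy) (k : ℕ) : moveB τ σ k = moveA σ τ k := by
  unfold moveA moveB
  rw [hists_swap σ τ k]

lemma payoffB_eq (T R P S : ℝ) (σ τ : Strategy) (N : ℕ) :
    payoffB T R P S σ τ N = payoffA T R P S τ σ N := by
  unfold payoffA payoffB
  exact Finset.sum_congr rfl fun k _ => by rw [moveA_swap σ τ k, moveB_swap σ τ k]

/-- The deviation: play the equilibrium-path moves before round `j+1`,
then always defect. -/
def dev (σ τ : Strategy) (j : ℕ) : Strategy :=
  fun h => if h.length < j then moveA σ τ h.length else D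

lemma hists_dev (σ τ : Strategy) (j : ℕ) :
    ∀ i ≤ j, hists (dev σ τ j) τ i = hists σ τ i := by
  intro i hi
  induction i with
  | zero => rfl
  | succ i ih =>
    have ih' := ih (Nat.le_of_succ_le hi)
    show ((hists (dev σ τ j) τ i).1 ++ [(dev σ τ j) (hists (dev σ τ j) τ i).2],
          (hists (dev σ τ j) τ i).2 ++ [τ (hists (dev σ τ j) τ i).1]) = _
    rw [ih']
    have hlen : (hists σ τ i).2.length = i := (hists_len σ τ i).2
    have hdv : dev σ τ j (hists σ τ i).2 = σ (hists σ τ i).2 := by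
      simp [dev, hlen, Nat.lt_of_succ_le hi, moveA]
    rw [hdv]
    rfl

lemma moveA_dev_ge (σ τ : Strategy) (j k : ℕ) (h : j ≤ k) :
    moveA (dev σ τ j) τ k = D := by
  have hlen : (hists (dev σ τ j) τ k).2.length = k := (hists_len _ _ k).2
  simp [moveA, dev, hlen, Nat.not_lt.mpr h]

lemma moveA_dev_lt (σ τ : Strategy) (j k : ℕ) (h : k < j) :
    moveA (dev σ τ j) τ k = moveA σ τ k := by
  have hlen : (hists (dev σ τ j) τ k).2.length = k := (hists_len _ _ k).2
  simp only [moveA, dev, hlen, if_pos h]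

lemma moveB_dev_le (σ τ : Strategy) (j k : ℕ) (h : k ≤ j) :
    moveB (dev σ τ j) τ k = moveB σ τ k := by
  simp [moveB, hists_dev σ τ j k h]

lemma dev_beats (T R P S : ℝ) (hTR : T > R) (hRP : R > P) (hPS : P > S)
    (N : ℕ) (σ τ : Strategy) (j : ℕ) (hj : j < N)
    (hC : moveA σ τ j = C)
    (hlast : ∀ m, j < m → m < N → moveA σ τ m = D ∧ moveB σ τ m = D) :
    payoffA T R P S σ τ N < payoffA T R P S (dev σ τ j) τ N := by
  have key : ∀ k ∈ Finset.range N,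
      u T R P S (moveA σ τ k) (moveB σ τ k)
        ≤ u T R P S (moveA (dev σ τ j) τ k) (moveB (dev σ τ j) τ k) := by
    intro k hk
    rw [Finset.mem_range] at hk
    rcases lt_trichotomy k j with h | h | h
    · rw [moveA_dev_lt σ τ j k h, moveB_dev_le σ τ j k (le_of_lt h)]
    · subst h
      rw [moveA_dev_ge σ τ k k le_rfl, moveB_dev_le σ τ k k le_rfl, hC]
      cases moveB σ τ k <;> simp only [u] <;> linarith
    · obtain ⟨ha, hb⟩ := hlast k h hk
      rw [moveA_dev_ge σ τ j k (le_of_lt h), ha, hb]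
      cases moveB (dev σ τ j) τ k <;> simp only [u] <;> linarith
  have strict : u T R P S (moveA σ τ j) (moveB σ τ j)
      < u T R P S (moveA (dev σ τ j) τ j) (moveB (dev σ τ j) τ j) := by
    rw [moveA_dev_ge σ τ j j le_rfl, moveB_dev_le σ τ j j le_rfl, hC]
    cases moveB σ τ j <;> simp only [u] <;> linarith
  exact Finset.sum_lt_sum key ⟨j, Finset.mem_range.mpr hj, strict⟩

/-- In the `N`-round repeated Prisoner's Dilemma with `T > R > P > S`, every
Nash equilibrium `(σ, τ)` induces the all-defect play path. -/
theorem nash_equilibrium_all_defect (T R P S : ℝ)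
    (hTR : T > R) (hRP : R > P) (hPS : P > S) (N : ℕ) (σ τ : Strategy)
    (hNashA : ∀ σ' : Strategy, payoffA T R P S σ' τ N ≤ payoffA T R P S σ τ N)
    (hNashB : ∀ τ' : Strategy, payoffB T R P S σ τ' N ≤ payoffB T R P S σ τ N) :
    ∀ k < N, moveA σ τ k = D ∧ moveB σ τ k = D := by
  have step : ∀ k < N, (∀ m, k < m → m < N → moveA σ τ m = D ∧ moveB σ τ m = D) →
      (moveA σ τ k = D ∧ moveB σ τ k = D) := by
    intro k hk hlast
    constructor
    · by_contra hA
      have hAC : moveA σ τ k = C := by cases hA' : moveA σ τ k <;> simp_all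
      have := dev_beats T R P S hTR hRP hPS N σ τ k hk hAC hlast
      exact absurd (hNashA (dev σ τ k)) (not_le.mpr this)
    · by_contra hB
      have hBC : moveA τ σ k = C := by
        rw [moveA_swap]; cases hB' : moveB σ τ k <;> simp_all
      have hlast' : ∀ m, k < m → m < N → moveA τ σ m = D ∧ moveB τ σ m = D := by
        intro m h1 h2
        exact ⟨(moveA_swap σ τ m).trans (hlast m h1 h2).2,
          (moveB_swap σ τ m).trans (hlast m h1 h2).1⟩
      have := dev_beats T R P S hTR hRP hPS N τ σ k hk hBC hlast'
      rw [← payoffB_eq, ← payoffB_eq] at this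
      exact absurd (hNashB (dev τ σ k)) (not_le.mpr this)
  have H : ∀ d k, N - k ≤ d → k < N → moveA σ τ k = D ∧ moveB σ τ k = D := by
    intro d
    induction d with
    | zero => intro k h hk; omega
    | succ d ih =>
      intro k h hk
      exact step k hk (fun m h1 h2 => ih m (by omega) h2)
  exact fun k hk => H N k (by omega) hk
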